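/- arXiv:1809.07796 — 6 statements merged into one kernel-verified Lean document; each statement's English description precedes it below -/
import Mathlib

section
/- Let h ∈ C²(I) on a compact interval I with |h'(x)| ≥ δ₁ > 0 for all x ∈ I and |h''(x)| ≥ δ₂ > 0 for all x ∈ I. For τ > 0 let E(τ) := {x ∈ I : |h(x)| < τ}. Then there is an absolute constant K such that the Lebesgue measure of E(τ) satisfies |E(τ)| ≤ K · min(τ/δ₁, √(τ/δ₂)). -/
/-!
If `|h'| ≥ δ₁` then `h'` has constant sign, so `|h b - h a| ≥ δ₁ (b - a)`. If moreover
`|h''| ≥ δ₂`, then `h''` too has constant sign, so `h'` moves monotonically at rate `δ₂`: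
on one half of `[a, b]` it is at least `δ₂ (b - a) / 2`, while on the other half it keeps
its sign; hence `|h b - h a| ≥ δ₂ (b - a)² / 4`. Two points of the sublevel set `{|h| < τ}`
have `|h b - h a| < 2τ`, so the set has diameter `O(min (τ / δ₁) (√(τ / δ₂)))`, which
bounds its measure.
-/

open Set Real MeasureTheory

theorem IsPreconnected.le_or_le_neg_of_le_abs {s : Set ℝ} {f : ℝ → ℝ} {δ : ℝ}
    (hs : IsPreconnected s) (hf : ContinuousOn f s) (hδ : 0 < δ)
    (h : ∀ x ∈ s, δ ≤ |f x|) : (∀ x ∈ s, δ ≤ f x) ∨ (∀ x ∈ s, f x ≤ -δ) := by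
  have hne : ∀ x ∈ s, f x ≠ 0 := fun x hx => abs_pos.1 (hδ.trans_le (h x hx))
  refine (hs.mapsTo_Ioi_or_Iio hf hne).imp (fun hpos x hx => ?_) (fun hneg x hx => ?_)
  · exact (h x hx).trans_eq (abs_of_pos (show 0 < f x from hpos hx))
  · exact le_neg_of_le_neg ((h x hx).trans_eq (abs_of_neg (hneg hx)))

section Growth

variable {s : Set ℝ} {f f' f'' : ℝ → ℝ} {a b C δ : ℝ}

theorem mul_sub_le_sub_of_le_hasDerivWithinAt (hs : OrdConnected s)
    (hf : ∀ x ∈ s, HasDerivWithinAt f (f' x) s x) (ha : a ∈ s) (hb : b ∈ s) (hab : a ≤ b)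
    (hC : ∀ x ∈ Icc a b, C ≤ f' x) : C * (b - a) ≤ f b - f a := by
  have hsub : Icc a b ⊆ s := hs.out ha hb
  have hg : ∀ x ∈ Icc a b, HasDerivWithinAt (fun y => f y - C * y) (f' x - C) (Icc a b) x :=
    fun x hx => by
      have := ((hf x (hsub hx)).mono hsub).sub ((hasDerivWithinAt_id x _).const_mul C)
      rwa [mul_one] at this
  have hmono : MonotoneOn (fun y => f y - C * y) (Icc a b) :=
    monotoneOn_of_hasDerivWithinAt_nonneg (convex_Icc a b)
      (fun x hx => (hg x hx).continuousWithinAt)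
      (fun x hx => (hg x (interior_subset hx)).mono interior_subset)
      (fun x hx => sub_nonneg.2 (hC x (interior_subset hx)))
  have := hmono (left_mem_Icc.2 hab) (right_mem_Icc.2 hab) hab
  linarith

theorem mul_sub_le_abs_sub_of_le_abs_deriv (hs : OrdConnected s)
    (hf : ∀ x ∈ s, HasDerivWithinAt f (f' x) s x) (hf' : ContinuousOn f' s) (hδ : 0 < δ)
    (h₁ : ∀ x ∈ s, δ ≤ |f' x|) (ha : a ∈ s) (hb : b ∈ s) (hab : a ≤ b) :
    δ * (b - a) ≤ |f b - f a| := by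
  have hsub : Icc a b ⊆ s := hs.out ha hb
  rcases hs.isPreconnected.le_or_le_neg_of_le_abs hf' hδ h₁ with hpos | hneg
  · exact (mul_sub_le_sub_of_le_hasDerivWithinAt hs hf ha hb hab
      fun x hx => hpos x (hsub hx)).trans (le_abs_self _)
  · have := mul_sub_le_sub_of_le_hasDerivWithinAt (f := fun x => -f x) hs
      (fun x hx => (hf x hx).neg) ha hb hab fun x hx => le_neg_of_le_neg (hneg x (hsub hx))
    linarith [neg_le_abs (f b - f a)]

theorem mul_sq_le_sub_of_deriv_nonneg (hs : OrdConnected s)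
    (hf : ∀ x ∈ s, HasDerivWithinAt f (f' x) s x)
    (hf' : ∀ x ∈ s, HasDerivWithinAt f' (f'' x) s x) (hδ : 0 ≤ δ) (h₀ : ∀ x ∈ s, 0 ≤ f' x)
    (h₂ : (∀ x ∈ s, δ ≤ f'' x) ∨ (∀ x ∈ s, f'' x ≤ -δ)) (ha : a ∈ s) (hb : b ∈ s)
    (hab : a ≤ b) : δ * (b - a) ^ 2 / 4 ≤ f b - f a := by
  have hsub : Icc a b ⊆ s := hs.out ha hb
  have hmid : (a + b) / 2 ∈ s := hsub ⟨by linarith, by linarith⟩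
  have hhalf : (∀ x ∈ Icc ((a + b) / 2) b, δ * ((b - a) / 2) ≤ f' x) ∨
      (∀ x ∈ Icc a ((a + b) / 2), δ * ((b - a) / 2) ≤ f' x) := by
    refine h₂.imp (fun hinc x hx => ?_) (fun hdec x hx => ?_)
    · have hx' : x ∈ s := hsub ⟨by linarith [hx.1], hx.2⟩
      have hgrowth := mul_sub_le_sub_of_le_hasDerivWithinAt hs hf' ha hx' (by linarith [hx.1])
        fun y hy => hinc y (hs.out ha hx' hy)
      have hdist := mul_le_mul_of_nonneg_left (show (b - a) / 2 ≤ x - a by linarith [hx.1]) hδ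
      linarith [h₀ a ha]
    · have hx' : x ∈ s := hsub ⟨hx.1, by linarith [hx.2]⟩
      have hgrowth := mul_sub_le_sub_of_le_hasDerivWithinAt (f := fun y => -f' y) hs
        (fun y hy => (hf' y hy).neg) hx' hb (by linarith [hx.2])
        fun y hy => le_neg_of_le_neg (hdec y (hs.out hx' hb hy))
      have hdist := mul_le_mul_of_nonneg_left (show (b - a) / 2 ≤ b - x by linarith [hx.2]) hδ
      linarith [h₀ b hb]
  have hmono : ∀ {c d}, c ∈ s → d ∈ s → c ≤ d → 0 * (d - c) ≤ f d - f c := fun hc hd hcd =>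
    mul_sub_le_sub_of_le_hasDerivWithinAt hs hf hc hd hcd fun x hx => h₀ x (hs.out hc hd hx)
  rcases hhalf with hright | hleft
  · linear_combination mul_sub_le_sub_of_le_hasDerivWithinAt hs hf hmid hb (by linarith) hright
      + hmono ha hmid (by linarith)
  · linear_combination mul_sub_le_sub_of_le_hasDerivWithinAt hs hf ha hmid (by linarith) hleft
      + hmono hmid hb (by linarith)

theorem mul_sq_le_abs_sub_of_le_abs_deriv2 (hs : OrdConnected s)
    (hf : ∀ x ∈ s, HasDerivWithinAt f (f' x) s x)
    (hf' : ∀ x ∈ s, HasDerivWithinAt f' (f'' x) s x) (hf'' : ContinuousOn f'' s) (hδ : 0 < δ)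
    (h₁ : ∀ x ∈ s, f' x ≠ 0) (h₂ : ∀ x ∈ s, δ ≤ |f'' x|) (ha : a ∈ s) (hb : b ∈ s)
    (hab : a ≤ b) : δ * (b - a) ^ 2 / 4 ≤ |f b - f a| := by
  have hf'c : ContinuousOn f' s := fun x hx => (hf' x hx).continuousWithinAt
  have hsign₂ := hs.isPreconnected.le_or_le_neg_of_le_abs hf'' hδ h₂
  rcases hs.isPreconnected.mapsTo_Ioi_or_Iio hf'c h₁ with hpos | hneg
  · exact (mul_sq_le_sub_of_deriv_nonneg hs hf hf' hδ.le (fun x hx => (hpos hx).le) hsign₂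
      ha hb hab).trans (le_abs_self _)
  · have := mul_sq_le_sub_of_deriv_nonneg (f := fun x => -f x) (f' := fun x => -f' x)
      (f'' := fun x => -f'' x) hs (fun x hx => (hf x hx).neg) (fun x hx => (hf' x hx).neg)
      hδ.le (fun x hx => neg_nonneg.2 (hneg hx).le)
      (hsign₂.symm.imp (fun h x hx => le_neg_of_le_neg (h x hx)) fun h x hx => neg_le_neg (h x hx))
      ha hb hab
    linarith [neg_le_abs (f b - f a)]

end Growth

theorem le_three_mul_min_of_mul_le_of_mul_sq_le {d δ₁ δ₂ τ : ℝ} (hd : 0 ≤ d) (hδ₁ : 0 < δ₁)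
    (hδ₂ : 0 < δ₂) (h₁ : δ₁ * d ≤ 2 * τ) (h₂ : δ₂ * d ^ 2 / 4 ≤ 2 * τ) :
    d ≤ 3 * min (τ / δ₁) √(τ / δ₂) := by
  have hτ : 0 ≤ τ := by nlinarith [mul_nonneg hδ₁.le hd]
  rw [mul_min_of_nonneg _ _ (by norm_num : (0 : ℝ) ≤ 3)]
  refine le_min ?_ ?_
  · rw [← mul_div_assoc, le_div_iff₀ hδ₁]
    nlinarith
  · rw [← div_le_iff₀' (by norm_num : (0 : ℝ) < 3), Real.le_sqrt (by positivity) (by positivity),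
      le_div_iff₀ hδ₂]
    nlinarith [mul_nonneg hδ₂.le (sq_nonneg d)]

theorem volume_toReal_le_of_forall_sub_le {s : Set ℝ} {d : ℝ} (hd : 0 ≤ d)
    (h : ∀ a ∈ s, ∀ b ∈ s, a ≤ b → b - a ≤ d) : (volume s).toReal ≤ d := by
  refine ENNReal.toReal_le_of_le_ofReal hd ((Real.volume_le_diam s).trans
    (Metric.ediam_le_of_forall_dist_le fun x hx y hy => ?_))
  rw [Real.dist_eq]
  rcases le_total x y with hxy | hyx
  · rw [abs_sub_comm, abs_of_nonneg (sub_nonneg.2 hxy)]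
    exact h x hx y hy hxy
  · rw [abs_of_nonneg (sub_nonneg.2 hyx)]
    exact h y hy x hx hyx

theorem measure_sublevel_bound :
    ∃ K : ℝ, 0 < K ∧
      ∀ (ξ η : ℝ) (h h' h'' : ℝ → ℝ) (δ₁ δ₂ : ℝ),
        (∀ x ∈ Icc ξ η, HasDerivWithinAt h (h' x) (Icc ξ η) x) →
        (∀ x ∈ Icc ξ η, HasDerivWithinAt h' (h'' x) (Icc ξ η) x) →
        ContinuousOn h'' (Icc ξ η) →
        0 < δ₁ → (∀ x ∈ Icc ξ η, δ₁ ≤ |h' x|) →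
        0 < δ₂ → (∀ x ∈ Icc ξ η, δ₂ ≤ |h'' x|) →
        ∀ τ : ℝ, 0 < τ →
          (volume {x ∈ Icc ξ η | |h x| < τ}).toReal
            ≤ K * min (τ / δ₁) (Real.sqrt (τ / δ₂)) := by
  refine ⟨3, by norm_num, fun ξ η h h' h'' δ₁ δ₂ hh hh' hh'' hδ₁ h₁ hδ₂ h₂ τ hτ => ?_⟩
  have hI : OrdConnected (Icc ξ η) := ordConnected_Icc
  have hh'c : ContinuousOn h' (Icc ξ η) := fun x hx => (hh' x hx).continuousWithinAt
  have hh'0 : ∀ x ∈ Icc ξ η, h' x ≠ 0 := fun x hx => abs_pos.1 (hδ₁.trans_le (h₁ x hx))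
  refine volume_toReal_le_of_forall_sub_le (by positivity) ?_
  rintro a ⟨ha, hτa⟩ b ⟨hb, hτb⟩ hab
  have hdiff : |h b - h a| ≤ 2 * τ := by linarith [abs_sub (h b) (h a)]
  exact le_three_mul_min_of_mul_le_of_mul_sq_le (sub_nonneg.2 hab) hδ₁ hδ₂
    ((mul_sub_le_abs_sub_of_le_abs_deriv hI hh hh'c hδ₁ h₁ ha hb hab).trans hdiff)
    ((mul_sq_le_abs_sub_of_le_abs_deriv2 hI hh hh' hh'' hδ₂ hh'0 h₂ ha hb hab).trans hdiff)
end

section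
/- Let M := 1 + max_{x∈I}|f'(x)|. For every integer J ≥ 1 and every λ ∈ (0,1/2), the sum of |μ(j₁,j₂,p,λ)| over all integers p and all pairs of integers (j₁,j₂) with |j₁| ≤ J, |j₂| ≤ J and |j₁| > 2M|j₂| is at most K λ J², where K is a constant depending only on f and I. -/
open Set Real MeasureTheory
open scoped Classical

set_option maxHeartbeats 1600000 in
private lemma pair_sum_bound (ξ η : ℝ) (hξη : ξ ≤ η)
    (f f' : ℝ → ℝ)
    (hf : ∀ x ∈ Set.Icc ξ η, HasDerivWithinAt f (f' x) (Set.Icc ξ η) x)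
    (M B : ℝ) (hM0 : 0 ≤ M) (hM : ∀ x ∈ Set.Icc ξ η, |f' x| ≤ M)
    (hB0 : 0 ≤ B) (hB : ∀ x ∈ Set.Icc ξ η, |f x| ≤ B)
    (j₁ j₂ : ℤ) (hj : 2 * (1 + M) * |(j₂ : ℝ)| < |(j₁ : ℝ)|)
    (lam : ℝ) (hlam : 0 < lam) (hlam2 : lam < 1/2) :
    ∑' p : ℤ, (volume {x ∈ Set.Icc ξ η |
        |(j₁ : ℝ) * x + (j₂ : ℝ) * f x - (p : ℝ)| < lam}).toReal
      ≤ 24 * (⌈max |ξ| |η| + B + 1⌉₊ : ℝ) * lam := by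
  set C : ℝ := max |ξ| |η| + B + 1 with hCdef
  have hA0 : 0 ≤ max |ξ| |η| := le_trans (abs_nonneg ξ) (le_max_left _ _)
  have hC1 : 1 ≤ C := by simp only [hCdef]; linarith
  have hCle : C ≤ (⌈C⌉₊ : ℝ) := Nat.le_ceil C
  have hCn : (1 : ℝ) ≤ (⌈C⌉₊ : ℝ) := le_trans hC1 hCle
  have hj1 : (1 : ℝ) ≤ |(j₁ : ℝ)| := by
    have hne : j₁ ≠ 0 := by
      rintro rfl
      simp only [Int.cast_zero, abs_zero] at hj
      nlinarith [abs_nonneg ((j₂ : ℝ))]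
    have := Int.one_le_abs hne
    rw [← Int.cast_abs]
    exact_mod_cast this
  have hj1pos : (0 : ℝ) < |(j₁ : ℝ)| := lt_of_lt_of_le one_pos hj1
  have hj2 : |(j₂ : ℝ)| ≤ |(j₁ : ℝ)| := by nlinarith [abs_nonneg ((j₂ : ℝ))]
  have hMj : M * |(j₂ : ℝ)| ≤ |(j₁ : ℝ)| / 2 := by nlinarith [abs_nonneg ((j₂ : ℝ))]
  have hlip : ∀ x ∈ Set.Icc ξ η, ∀ y ∈ Set.Icc ξ η, |f y - f x| ≤ M * |y - x| := by
    intro x hx y hy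
    have := Convex.norm_image_sub_le_of_norm_hasDerivWithin_le hf
      (fun z hz => by simpa [Real.norm_eq_abs] using hM z hz) (convex_Icc ξ η) hx hy
    simpa [Real.norm_eq_abs] using this
  -- key lower bound
  have hkey : ∀ x ∈ Set.Icc ξ η, ∀ y ∈ Set.Icc ξ η,
      |(j₁ : ℝ)| / 2 * |y - x| ≤
        |((j₁ : ℝ) * y + (j₂ : ℝ) * f y) - ((j₁ : ℝ) * x + (j₂ : ℝ) * f x)| := by
    intro x hx y hy
    have e0 : ((j₁ : ℝ) * y + (j₂ : ℝ) * f y) - ((j₁ : ℝ) * x + (j₂ : ℝ) * f x)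
        = (j₁ : ℝ) * (y - x) + (j₂ : ℝ) * (f y - f x) := by ring
    have htri : |(j₁ : ℝ) * (y - x)| - |(j₂ : ℝ) * (f y - f x)|
        ≤ |(j₁ : ℝ) * (y - x) + (j₂ : ℝ) * (f y - f x)| := by
      have := abs_add_le ((j₁ : ℝ) * (y - x) + (j₂ : ℝ) * (f y - f x))
        (-((j₂ : ℝ) * (f y - f x)))
      simp only [abs_neg] at this
      calc |(j₁ : ℝ) * (y - x)| - |(j₂ : ℝ) * (f y - f x)|
          = |(j₁ : ℝ) * (y - x) + (j₂ : ℝ) * (f y - f x) + (-((j₂ : ℝ) * (f y - f x)))|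
            - |(j₂ : ℝ) * (f y - f x)| := by ring_nf
        _ ≤ |(j₁ : ℝ) * (y - x) + (j₂ : ℝ) * (f y - f x)| := by linarith
    rw [e0]
    rw [abs_mul, abs_mul] at htri
    have h3 : |(j₂ : ℝ)| * |f y - f x| ≤ |(j₂ : ℝ)| * (M * |y - x|) :=
      mul_le_mul_of_nonneg_left (hlip x hx y hy) (abs_nonneg _)
    nlinarith [abs_nonneg (y - x), abs_nonneg ((j₂ : ℝ))]
  -- per p volume bound
  have hvol : ∀ p : ℤ, (volume {x ∈ Set.Icc ξ η |
      |(j₁ : ℝ) * x + (j₂ : ℝ) * f x - (p : ℝ)| < lam}).toReal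
        ≤ 8 * lam / |(j₁ : ℝ)| := by
    intro p
    by_cases hne : ({x ∈ Set.Icc ξ η |
        |(j₁ : ℝ) * x + (j₂ : ℝ) * f x - (p : ℝ)| < lam}).Nonempty
    · obtain ⟨x₀, hx₀I, hx₀⟩ := hne
      set r : ℝ := 4 * lam / |(j₁ : ℝ)| with hrdef
      have hsub : {x ∈ Set.Icc ξ η |
          |(j₁ : ℝ) * x + (j₂ : ℝ) * f x - (p : ℝ)| < lam} ⊆ Set.Icc (x₀ - r) (x₀ + r) := by
        rintro y ⟨hyI, hy⟩
        have hk := hkey x₀ hx₀I y hyI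
        obtain ⟨h1, h2⟩ := abs_lt.mp hy
        obtain ⟨h3, h4⟩ := abs_lt.mp hx₀
        have hd : |((j₁ : ℝ) * y + (j₂ : ℝ) * f y) - ((j₁ : ℝ) * x₀ + (j₂ : ℝ) * f x₀)|
            < 2 * lam := by
          rw [abs_lt]; constructor <;> nlinarith
        have hyx : |y - x₀| ≤ r := by
          rw [hrdef, le_div_iff₀ hj1pos]
          nlinarith
        obtain ⟨h5, h6⟩ := abs_le.mp hyx
        exact ⟨by linarith, by linarith⟩
      have hm := measure_mono (μ := volume) hsub
      rw [Real.volume_Icc] at hm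
      have hr0 : 0 ≤ r := by positivity
      have := ENNReal.toReal_mono ENNReal.ofReal_ne_top hm
      rw [ENNReal.toReal_ofReal (by linarith)] at this
      calc (volume {x ∈ Set.Icc ξ η |
            |(j₁ : ℝ) * x + (j₂ : ℝ) * f x - (p : ℝ)| < lam}).toReal
          ≤ x₀ + r - (x₀ - r) := this
        _ = 8 * lam / |(j₁ : ℝ)| := by rw [hrdef]; ring
    · rw [Set.not_nonempty_iff_eq_empty] at hne
      rw [hne]
      simp only [measure_empty, ENNReal.toReal_zero]
      positivity
  set N : ℤ := (⌈C⌉₊ : ℤ) * |j₁| with hNdef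
  have hNcast : (N : ℝ) = (⌈C⌉₊ : ℝ) * |(j₁ : ℝ)| := by
    rw [hNdef]; push_cast [Int.cast_abs]; ring
  have hN1 : (1 : ℝ) ≤ (N : ℝ) := by
    rw [hNcast]
    have := mul_le_mul hCn hj1 zero_le_one (le_trans zero_le_one hCn)
    linarith
  have hN0 : 0 ≤ N := by exact_mod_cast le_trans zero_le_one hN1
  -- terms vanish outside Finset.Icc (-N) N
  have hzero : ∀ p : ℤ, p ∉ Finset.Icc (-N) N →
      (volume {x ∈ Set.Icc ξ η |
        |(j₁ : ℝ) * x + (j₂ : ℝ) * f x - (p : ℝ)| < lam}).toReal = 0 := by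
    intro p hp
    have hempty : {x ∈ Set.Icc ξ η |
        |(j₁ : ℝ) * x + (j₂ : ℝ) * f x - (p : ℝ)| < lam} = ∅ := by
      rw [Set.eq_empty_iff_forall_notMem]
      rintro x ⟨hxI, hx⟩
      have hxb : |x| ≤ max |ξ| |η| := by
        rw [abs_le]
        constructor
        · linarith [le_max_left |ξ| |η|, neg_abs_le ξ, hxI.1]
        · linarith [le_max_right |ξ| |η|, le_abs_self η, hxI.2]
      have hfx : |f x| ≤ B := hB x hxI
      have hpe : (p : ℝ) = (j₁ : ℝ) * x + (j₂ : ℝ) * f x +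
          (-((j₁ : ℝ) * x + (j₂ : ℝ) * f x - (p : ℝ))) := by ring
      have htri : |(p : ℝ)| ≤ |(j₁ : ℝ) * x| + |(j₂ : ℝ) * f x|
          + |(j₁ : ℝ) * x + (j₂ : ℝ) * f x - (p : ℝ)| := by
        calc |(p : ℝ)| = |(j₁ : ℝ) * x + (j₂ : ℝ) * f x +
            (-((j₁ : ℝ) * x + (j₂ : ℝ) * f x - (p : ℝ)))| := by rw [← hpe]
          _ ≤ |(j₁ : ℝ) * x| + |(j₂ : ℝ) * f x|
              + |(-((j₁ : ℝ) * x + (j₂ : ℝ) * f x - (p : ℝ)))| := abs_add_three _ _ _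
          _ = |(j₁ : ℝ) * x| + |(j₂ : ℝ) * f x|
              + |(j₁ : ℝ) * x + (j₂ : ℝ) * f x - (p : ℝ)| := by rw [abs_neg]
      rw [abs_mul, abs_mul] at htri
      have hb1 : |(j₁ : ℝ)| * |x| ≤ |(j₁ : ℝ)| * max |ξ| |η| :=
        mul_le_mul_of_nonneg_left hxb (abs_nonneg _)
      have hb2 : |(j₂ : ℝ)| * |f x| ≤ |(j₁ : ℝ)| * B :=
        mul_le_mul hj2 hfx (abs_nonneg _) (le_of_lt hj1pos)
      have hpb : |(p : ℝ)| ≤ (N : ℝ) := by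
        rw [hNcast]
        nlinarith [mul_nonneg (sub_nonneg.mpr hCle) (abs_nonneg ((j₁ : ℝ))), hx.le, hxI.1]
      have hpZ : |p| ≤ N := by
        have : |((p : ℤ) : ℝ)| ≤ (N : ℝ) := hpb
        rw [← Int.cast_abs] at this
        exact_mod_cast this
      exact hp (Finset.mem_Icc.mpr (abs_le.mp hpZ))
    rw [hempty]
    simp
  rw [tsum_eq_sum hzero]
  have hsum : ∑ p ∈ Finset.Icc (-N) N,
      (volume {x ∈ Set.Icc ξ η |
        |(j₁ : ℝ) * x + (j₂ : ℝ) * f x - (p : ℝ)| < lam}).toReal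
      ≤ (Finset.Icc (-N) N).card • (8 * lam / |(j₁ : ℝ)|) :=
    Finset.sum_le_card_nsmul _ _ _ (fun p _ => hvol p)
  have hcard : ((Finset.Icc (-N) N).card : ℝ) = 2 * (N : ℝ) + 1 := by
    have hc : (Finset.Icc (-N) N).card = (2 * N + 1).toNat := by
      rw [Int.card_Icc]; congr 1; ring
    have h3 : (0 : ℤ) ≤ 2 * N + 1 := by linarith
    have h4 : (((2 * N + 1).toNat : ℤ)) = 2 * N + 1 := Int.toNat_of_nonneg h3
    rw [hc]
    exact_mod_cast h4
  rw [nsmul_eq_mul, hcard] at hsum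
  refine le_trans hsum ?_
  rw [hNcast]
  have hdiv : (2 * ((⌈C⌉₊ : ℝ) * |(j₁ : ℝ)|) + 1) * (8 * lam / |(j₁ : ℝ)|)
      ≤ 24 * (⌈C⌉₊ : ℝ) * lam := by
    rw [mul_div_assoc', div_le_iff₀ hj1pos]
    have hma : 1 ≤ (⌈C⌉₊ : ℝ) * |(j₁ : ℝ)| := by
      have := mul_le_mul hCn hj1 zero_le_one (le_trans zero_le_one hCn)
      linarith
    nlinarith [mul_nonneg hlam.le (sub_nonneg.mpr hma)]
  exact hdiv

theorem sum_over_Theta1_bound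
    (ξ η c₁ c₂ : ℝ) (hξη : ξ ≤ η) (hc₁ : 0 < c₁)
    (f f' f'' : ℝ → ℝ)
    (hf : ∀ x ∈ Icc ξ η, HasDerivWithinAt f (f' x) (Icc ξ η) x)
    (hf' : ∀ x ∈ Icc ξ η, HasDerivWithinAt f' (f'' x) (Icc ξ η) x)
    (hf'' : ContinuousOn f'' (Icc ξ η))
    (hbd : ∀ x ∈ Icc ξ η, c₁ ≤ |f'' x| ∧ |f'' x| ≤ c₂) :
    ∃ K : ℝ, 0 < K ∧
      ∀ Mmax : ℝ, IsGreatest ((fun x => |f' x|) '' Icc ξ η) Mmax →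
      ∀ J : ℕ, 1 ≤ J → ∀ lam : ℝ, 0 < lam → lam < 1/2 →
        ∑ j ∈ (Finset.Icc (-(J : ℤ)) J ×ˢ Finset.Icc (-(J : ℤ)) J).filter
            (fun j => 2 * (1 + Mmax) * |(j.2 : ℝ)| < |(j.1 : ℝ)|),
          ∑' p : ℤ,
            (volume {x ∈ Icc ξ η | |(j.1 : ℝ) * x + (j.2 : ℝ) * f x - (p : ℝ)| < lam}).toReal
        ≤ K * lam * (J : ℝ) ^ 2 := by
  have hfc : ContinuousOn f (Icc ξ η) := fun x hx => (hf x hx).continuousWithinAt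
  obtain ⟨B₀, hB₀⟩ := isCompact_Icc.exists_bound_of_continuousOn hfc
  set B : ℝ := max B₀ 0 with hBdef
  have hB0 : 0 ≤ B := le_max_right _ _
  have hB : ∀ x ∈ Icc ξ η, |f x| ≤ B := fun x hx =>
    le_trans (by simpa [Real.norm_eq_abs] using hB₀ x hx) (le_max_left _ _)
  set C : ℝ := max |ξ| |η| + B + 1 with hCdef
  have hA0 : 0 ≤ max |ξ| |η| := le_trans (abs_nonneg ξ) (le_max_left _ _)
  have hC1 : 1 ≤ C := by simp only [hCdef]; linarith
  have hCn : (1 : ℝ) ≤ (⌈C⌉₊ : ℝ) := le_trans hC1 (Nat.le_ceil C)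
  refine ⟨216 * (⌈C⌉₊ : ℝ), by nlinarith, ?_⟩
  intro Mmax hMg J hJ lam hlam hlam2
  have hM0 : 0 ≤ Mmax := by
    obtain ⟨x, hx, he⟩ := hMg.1
    exact he ▸ abs_nonneg (f' x)
  have hMub : ∀ x ∈ Icc ξ η, |f' x| ≤ Mmax := fun x hx => hMg.2 ⟨x, hx, rfl⟩
  set s := (Finset.Icc (-(J : ℤ)) J ×ˢ Finset.Icc (-(J : ℤ)) J).filter
      (fun j => 2 * (1 + Mmax) * |((j.2 : ℤ) : ℝ)| < |((j.1 : ℤ) : ℝ)|) with hsdef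
  have hstep : ∀ j ∈ s,
      ∑' p : ℤ, (volume {x ∈ Icc ξ η |
        |(j.1 : ℝ) * x + (j.2 : ℝ) * f x - (p : ℝ)| < lam}).toReal
      ≤ 24 * (⌈C⌉₊ : ℝ) * lam := by
    intro j hjmem
    have hcond : 2 * (1 + Mmax) * |((j.2 : ℤ) : ℝ)| < |((j.1 : ℤ) : ℝ)| :=
      (Finset.mem_filter.mp hjmem).2
    exact pair_sum_bound ξ η hξη f f' hf Mmax B hM0 hMub hB0 hB j.1 j.2 hcond lam hlam hlam2
  calc ∑ j ∈ s, ∑' p : ℤ, (volume {x ∈ Icc ξ η |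
        |(j.1 : ℝ) * x + (j.2 : ℝ) * f x - (p : ℝ)| < lam}).toReal
      ≤ ∑ _j ∈ s, 24 * (⌈C⌉₊ : ℝ) * lam := Finset.sum_le_sum hstep
    _ = (s.card : ℝ) * (24 * (⌈C⌉₊ : ℝ) * lam) := by
        rw [Finset.sum_const, nsmul_eq_mul]
    _ ≤ 216 * (⌈C⌉₊ : ℝ) * lam * (J : ℝ) ^ 2 := by
        have hcard : (s.card : ℝ) ≤ ((2 * J + 1 : ℕ) : ℝ) ^ 2 := by
          have h1 : s.card ≤ ((Finset.Icc (-(J : ℤ)) J ×ˢ Finset.Icc (-(J : ℤ)) J)).card :=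
            Finset.card_filter_le _ _
          have h2 : ((Finset.Icc (-(J : ℤ)) J ×ˢ Finset.Icc (-(J : ℤ)) J)).card
              = (2 * J + 1) * (2 * J + 1) := by
            rw [Finset.card_product, Int.card_Icc]
            have : (J : ℤ) + 1 - (-(J : ℤ)) = 2 * (J : ℤ) + 1 := by ring
            rw [this]
            have h3 : ((2 * (J : ℤ) + 1)).toNat = 2 * J + 1 := by
              omega
            rw [h3]
          rw [h2] at h1
          calc (s.card : ℝ) ≤ ((2 * J + 1) * (2 * J + 1) : ℕ) := by exact_mod_cast h1
            _ = ((2 * J + 1 : ℕ) : ℝ) ^ 2 := by push_cast; ring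
        have hJ1 : (1 : ℝ) ≤ (J : ℝ) := by exact_mod_cast hJ
        have h4 : ((2 * J + 1 : ℕ) : ℝ) ^ 2 ≤ 9 * (J : ℝ) ^ 2 := by
          push_cast
          nlinarith
        have h5 : (s.card : ℝ) ≤ 9 * (J : ℝ) ^ 2 := le_trans hcard h4
        have h6 : (0 : ℝ) ≤ 24 * (⌈C⌉₊ : ℝ) * lam := by positivity
        calc (s.card : ℝ) * (24 * (⌈C⌉₊ : ℝ) * lam)
            ≤ 9 * (J : ℝ) ^ 2 * (24 * (⌈C⌉₊ : ℝ) * lam) := mul_le_mul_of_nonneg_right h5 h6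
          _ = 216 * (⌈C⌉₊ : ℝ) * lam * (J : ℝ) ^ 2 := by ring
end

section
/- For every pair (j₁,j₂) ∈ Θ₂, every λ ∈ (0,1/8], and every integer p ≠ p₀, one has |μ(j₁,j₂,p,λ)| ≤ K λ (|j₂| · |p − p₀|)^{−1/2}, where K is a constant depending only on c₁ and c₂. -/
open Set Real MeasureTheory

/-!
Write `F x = j₁ x + j₂ f x`, so that `|F''| ≍ |j₂|` and `F'(x₀) = 0`. Since `F` varies at most
quadratically around its critical point, `|F x - F x₀| ≤ c₂ |j₂| (x - x₀)²`, and since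
`|F x₀ - p₀| ≤ 1/2` and `λ ≤ 1/8`, every `x` with `|F x - p| < λ` lies at distance
`r ≍ (|p - p₀| / |j₂|)^{1/2}` or more from `x₀`. Beyond that distance `|F'| ≥ c₁ |j₂| r`, so on each
side of `x₀` the solutions of `|F x - p| < λ` form a set of diameter at most `2λ / (c₁ |j₂| r)`,
and `4λ / (c₁ |j₂| r) ≍ λ (|j₂| |p - p₀|)^{-1/2}`.
-/

section DerivativeBounds

variable {F F' : ℝ → ℝ}

theorem mul_abs_sub_le_abs_sub_of_le_abs_deriv {s : Set ℝ} {m : ℝ} (hs : s.OrdConnected)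
    (hF : ∀ x ∈ s, HasDerivAt F (F' x) x) (hm : ∀ x ∈ s, m ≤ |F' x|) {x y : ℝ}
    (hx : x ∈ s) (hy : y ∈ s) : m * |y - x| ≤ |F y - F x| := by
  wlog hxy : x < y generalizing x y
  · rcases (not_lt.mp hxy).eq_or_lt with rfl | hyx
    · simp
    · simpa only [abs_sub_comm] using this hy hx hyx
  have hIcc : Icc x y ⊆ s := hs.out hx hy
  obtain ⟨c, hc, hslope⟩ := exists_hasDerivAt_eq_slope F F' hxy
    (fun z hz => (hF z (hIcc hz)).continuousAt.continuousWithinAt)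
    (fun z hz => hF z (hIcc (Ioo_subset_Icc_self hz)))
  rw [eq_div_iff (sub_pos.2 hxy).ne'] at hslope
  rw [← hslope, abs_mul, abs_of_pos (sub_pos.2 hxy)]
  exact mul_le_mul_of_nonneg_right (hm c (hIcc (Ioo_subset_Icc_self hc))) (sub_pos.2 hxy).le

theorem volume_setOf_abs_sub_lt_le {s : Set ℝ} {m p lam : ℝ} (hs : s.OrdConnected)
    (hF : ∀ x ∈ s, HasDerivAt F (F' x) x) (hm₀ : 0 < m) (hm : ∀ x ∈ s, m ≤ |F' x|) :
    volume {x ∈ s | |F x - p| < lam} ≤ ENNReal.ofReal (2 * lam / m) := by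
  refine (Real.volume_le_diam _).trans (Metric.ediam_le fun x hx y hy => ?_)
  have hlam : 0 ≤ lam := (abs_nonneg _).trans hx.2.le
  rw [edist_le_ofReal (by positivity), Real.dist_eq, le_div_iff₀ hm₀, mul_comm]
  linarith [mul_abs_sub_le_abs_sub_of_le_abs_deriv hs hF hm hy.1 hx.1,
    abs_sub_le (F x) p (F y), abs_sub_comm p (F y), hx.2, hy.2]

theorem abs_sub_le_mul_sq_of_deriv_eq_zero {F'' : ℝ → ℝ} {M x₀ : ℝ}
    (hF : ∀ x, HasDerivAt F (F' x) x) (hF' : ∀ x, HasDerivAt F' (F'' x) x)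
    (hM : ∀ x, |F'' x| ≤ M) (hx₀ : F' x₀ = 0) (x : ℝ) :
    |F x - F x₀| ≤ M * (x - x₀) ^ 2 := by
  have hM₀ : 0 ≤ M := (abs_nonneg _).trans (hM 0)
  have hF'_le (y : ℝ) : |F' y| ≤ M * |y - x₀| := by
    simpa [hx₀] using Convex.norm_image_sub_le_of_norm_hasDerivWithin_le
      (fun z _ => (hF' z).hasDerivWithinAt) (fun z _ => hM z) convex_univ (mem_univ x₀)
      (mem_univ y)
  have hlip := Convex.norm_image_sub_le_of_norm_hasDerivWithin_le (s := uIcc x₀ x)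
    (fun z _ => (hF z).hasDerivWithinAt)
    (fun z hz => (hF'_le z).trans (mul_le_mul_of_nonneg_left (abs_sub_left_of_mem_uIcc hz) hM₀))
    (convex_uIcc x₀ x) left_mem_uIcc right_mem_uIcc
  rw [Real.norm_eq_abs, Real.norm_eq_abs] at hlip
  rwa [mul_assoc, ← sq, sq_abs] at hlip

theorem abs_sub_le_four_mul_mul_sq_of_abs_sub_lt {F'' : ℝ → ℝ} {M x₀ p₀ p lam x : ℝ}
    (hF : ∀ x, HasDerivAt F (F' x) x) (hF' : ∀ x, HasDerivAt F' (F'' x) x)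
    (hM : ∀ x, |F'' x| ≤ M) (hx₀ : F' x₀ = 0) (hp₀ : |F x₀ - p₀| ≤ 1 / 2)
    (hp : 1 ≤ |p - p₀|) (hlam : lam ≤ 1 / 8) (hx : |F x - p| < lam) :
    |p - p₀| ≤ 4 * M * (x - x₀) ^ 2 := by
  have htri : |p - p₀| ≤ |F x - F x₀| + |F x₀ - p₀| + |p - F x| := by
    simpa using abs_add_three (F x - F x₀) (F x₀ - p₀) (p - F x)
  have hquad := abs_sub_le_mul_sq_of_deriv_eq_zero hF hF' hM hx₀ x
  rw [abs_sub_comm] at hx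
  linarith

theorem volume_abs_sub_lt_le_of_deriv_eq_zero {F'' : ℝ → ℝ} {m M x₀ p₀ p lam : ℝ}
    (hF : ∀ x, HasDerivAt F (F' x) x) (hF' : ∀ x, HasDerivAt F' (F'' x) x) (hm : 0 < m)
    (hF'' : ∀ x, m ≤ |F'' x| ∧ |F'' x| ≤ M) (hx₀ : F' x₀ = 0) (hp₀ : |F x₀ - p₀| ≤ 1 / 2)
    (hp : 1 ≤ |p - p₀|) (hlam₀ : 0 ≤ lam) (hlam : lam ≤ 1 / 8) :
    volume {x | |F x - p| < lam} ≤ ENNReal.ofReal (8 * √M * lam / (m * √|p - p₀|)) := by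
  set q := |p - p₀|
  have hM : 0 < M := hm.trans_le ((hF'' 0).1.trans (hF'' 0).2)
  set r := √q / (2 * √M) with hr_def
  have hr : 0 < r := by positivity
  have hMr : 4 * M * r ^ 2 = q := by
    rw [hr_def, div_pow, mul_pow, sq_sqrt (by positivity), sq_sqrt hM.le]
    field_simp
    norm_num
  have hsep (x : ℝ) (hx : |F x - p| < lam) : r ≤ |x - x₀| := by
    have := abs_sub_le_four_mul_mul_sq_of_abs_sub_lt hF hF' (fun y => (hF'' y).2) hx₀ hp₀ hp
      hlam hx
    have : r ^ 2 ≤ (x - x₀) ^ 2 := le_of_mul_le_mul_left (by linarith) (by positivity : 0 < 4 * M)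
    simpa [abs_of_pos hr] using sq_le_sq.1 this
  have hcover : {x | |F x - p| < lam} ⊆
      {x ∈ Iic (x₀ - r) | |F x - p| < lam} ∪ {x ∈ Ici (x₀ + r) | |F x - p| < lam} := by
    intro x hx
    rcases le_abs'.1 (hsep x hx) with h | h
    · exact Or.inl ⟨by rw [mem_Iic]; linarith, hx⟩
    · exact Or.inr ⟨by rw [mem_Ici]; linarith, hx⟩
  have hF'_ge (x : ℝ) : m * |x - x₀| ≤ |F' x| := by
    simpa [hx₀] using mul_abs_sub_le_abs_sub_of_le_abs_deriv ordConnected_univ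
      (fun y _ => hF' y) (fun y _ => (hF'' y).1) (mem_univ x₀) (mem_univ x)
  have hleft : ∀ x ∈ Iic (x₀ - r), m * r ≤ |F' x| := fun x hx =>
    (mul_le_mul_of_nonneg_left (le_abs'.2 (Or.inl (by linarith [mem_Iic.1 hx]))) hm.le).trans
      (hF'_ge x)
  have hright : ∀ x ∈ Ici (x₀ + r), m * r ≤ |F' x| := fun x hx =>
    (mul_le_mul_of_nonneg_left (le_abs'.2 (Or.inr (by linarith [mem_Ici.1 hx]))) hm.le).trans
      (hF'_ge x)
  have hsum : 2 * lam / (m * r) + 2 * lam / (m * r) = 8 * √M * lam / (m * √q) := by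
    rw [hr_def]; field_simp; ring
  calc volume {x | |F x - p| < lam}
      ≤ volume {x ∈ Iic (x₀ - r) | |F x - p| < lam} +
          volume {x ∈ Ici (x₀ + r) | |F x - p| < lam} :=
        (measure_mono hcover).trans (measure_union_le _ _)
    _ ≤ ENNReal.ofReal (2 * lam / (m * r)) + ENNReal.ofReal (2 * lam / (m * r)) :=
        add_le_add
          (volume_setOf_abs_sub_lt_le ordConnected_Iic (fun x _ => hF x) (by positivity) hleft)
          (volume_setOf_abs_sub_lt_le ordConnected_Ici (fun x _ => hF x) (by positivity) hright)
    _ = ENNReal.ofReal (8 * √M * lam / (m * √q)) := by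
        rw [← ENNReal.ofReal_add (by positivity) (by positivity), hsum]

end DerivativeBounds

theorem mu_bound_p_ne_p0
    (c₁ c₂ : ℝ) (hc₁ : 0 < c₁) (hc₁₂ : c₁ ≤ c₂) :
    ∃ K : ℝ, 0 < K ∧
      ∀ (ξ η : ℝ), ξ ≤ η →
      ∀ (f f' f'' : ℝ → ℝ),
        (∀ x, HasDerivAt f (f' x) x) →
        (∀ x, HasDerivAt f' (f'' x) x) →
        Continuous f'' →
        (∀ x, c₁ ≤ |f'' x| ∧ |f'' x| ≤ c₂) →
      ∀ Mmax : ℝ, IsGreatest ((fun x => |f' x|) '' Icc ξ η) Mmax →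
      ∀ j₁ j₂ : ℤ, j₂ ≠ 0 → |(j₁ : ℝ)| ≤ 2 * (1 + Mmax) * |(j₂ : ℝ)| →
      ∀ x₀ : ℝ, (j₁ : ℝ) + (j₂ : ℝ) * f' x₀ = 0 →
      ∀ p₀ : ℤ,
        -(1/2) < ((j₁ : ℝ) * x₀ + (j₂ : ℝ) * f x₀) - (p₀ : ℝ) →
        ((j₁ : ℝ) * x₀ + (j₂ : ℝ) * f x₀) - (p₀ : ℝ) ≤ 1/2 →
      ∀ lam : ℝ, 0 < lam → lam ≤ 1/8 →
      ∀ p : ℤ, p ≠ p₀ →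
        (volume {x ∈ Icc ξ η | |(j₁ : ℝ) * x + (j₂ : ℝ) * f x - (p : ℝ)| < lam}).toReal
          ≤ K * lam * ((|(j₂ : ℝ)| * |((p : ℝ)) - (p₀ : ℝ)|) ^ (-(1 : ℝ)/2)) := by
  have hc₂ : 0 < c₂ := hc₁.trans_le hc₁₂
  refine ⟨8 * √c₂ / c₁, by positivity, ?_⟩
  intro ξ η _ f f' f'' hf hf' _ hf'' _ _ j₁ j₂ hj₂ _ x₀ hx₀ p₀ hp₀l hp₀r lam hlam hlam8 p hp
  have ha : 0 < |(j₂ : ℝ)| := by positivity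
  have hq : 1 ≤ |(p : ℝ) - p₀| := by exact_mod_cast Int.one_le_abs (sub_ne_zero.2 hp)
  have hF''_bounds (x : ℝ) :
      c₁ * |(j₂ : ℝ)| ≤ |j₂ * f'' x| ∧ |j₂ * f'' x| ≤ c₂ * |(j₂ : ℝ)| := by
    rw [abs_mul, mul_comm c₁, mul_comm c₂]
    exact ⟨mul_le_mul_of_nonneg_left (hf'' x).1 ha.le, mul_le_mul_of_nonneg_left (hf'' x).2 ha.le⟩
  have hF (x : ℝ) : HasDerivAt (fun x => j₁ * x + j₂ * f x) (j₁ + j₂ * f' x) x := by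
    simpa [Pi.add_def] using ((hasDerivAt_id' x).const_mul (j₁ : ℝ)).add ((hf x).const_mul (j₂ : ℝ))
  have hF' (x : ℝ) : HasDerivAt (fun x => j₁ + j₂ * f' x) (j₂ * f'' x) x :=
    ((hf' x).const_mul (j₂ : ℝ)).const_add (j₁ : ℝ)
  have hvol := volume_abs_sub_lt_le_of_deriv_eq_zero hF hF' (mul_pos hc₁ ha) hF''_bounds hx₀
    (abs_le.2 ⟨hp₀l.le, hp₀r⟩) hq hlam.le hlam8
  have hK : 8 * √(c₂ * |(j₂ : ℝ)|) * lam / (c₁ * |(j₂ : ℝ)| * √|(p : ℝ) - p₀|) =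
      8 * √c₂ / c₁ * lam * (|(j₂ : ℝ)| * |(p : ℝ) - p₀|) ^ (-(1 : ℝ) / 2) := by
    rw [neg_div, rpow_neg (by positivity), ← sqrt_eq_rpow, sqrt_mul hc₂.le, sqrt_mul ha.le]
    nth_rw 2 [← mul_self_sqrt ha.le]
    field_simp
  refine ENNReal.toReal_le_of_le_ofReal (by positivity) ?_
  rw [← hK]
  exact (measure_mono fun x hx => hx.2).trans hvol
end

section
/- For every pair (j₁,j₂) ∈ Θ₂ and every λ ∈ (0,1/8] such that ‖F(x₀)‖ ≥ 2λ, one has |μ(j₁,j₂,p₀,λ)| ≤ K λ |j₂|^{−1/2} ‖F(x₀)‖^{−1/2}, where K is a constant depending only on c₁ and c₂. -/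
open Set Real MeasureTheory

/-- Distance from a real number to the nearest integer. -/
noncomputable def nint (y : ℝ) : ℝ := |y - round y|

/-!
After multiplying by the sign of `j₂ f''`, the phase `F x = j₁ x + j₂ f x` satisfies
`a ≤ F'' ≤ b` with `a = c₁ |j₂|`, `b = c₂ |j₂|`, so it is convex with minimum at `x₀`.
Let `N = |F x₀ - p₀| ≥ ‖F x₀‖ ≥ 2λ`. By Taylor, `F x - F x₀ ≤ b (x - x₀)² / 2`, so `F` stays
within `N / 2` of `F x₀` for `|x - x₀| < r = √(N / b)` and cannot meet the window `|F - p₀| < λ`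
there. Beyond that distance `|F'| ≥ a r`, so on each side of `x₀` the window is crossed within
length `2λ / (a r)`, for a total of `4λ / (a r) = 4 √c₂ / c₁ · λ |j₂|^{-1/2} N^{-1/2}`.
-/

lemma sub_le_sub_of_hasDerivAt_le {f g f' g' : ℝ → ℝ} (hf : ∀ x, HasDerivAt f (f' x) x)
    (hg : ∀ x, HasDerivAt g (g' x) x) {a b : ℝ} (hab : a ≤ b)
    (h : ∀ x ∈ Icc a b, f' x ≤ g' x) : f b - f a ≤ g b - g a := by
  have hmono : MonotoneOn (fun x => g x - f x) (Icc a b) :=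
    monotoneOn_of_hasDerivWithinAt_nonneg (convex_Icc a b)
      (fun x _ => ((hg x).sub (hf x)).continuousAt.continuousWithinAt)
      (fun x _ => ((hg x).sub (hf x)).hasDerivWithinAt)
      (fun x hx => sub_nonneg.2 (h x (interior_subset hx)))
  linarith [hmono (left_mem_Icc.2 hab) (right_mem_Icc.2 hab) hab]

lemma Continuous.forall_pos_or_forall_neg {X : Type*} [TopologicalSpace X] [PreconnectedSpace X]
    {f : X → ℝ} (hf : Continuous f) (h₀ : ∀ x, f x ≠ 0) : (∀ x, 0 < f x) ∨ (∀ x, f x < 0) := by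
  by_contra! h
  obtain ⟨⟨x, hx⟩, ⟨y, hy⟩⟩ := h
  obtain ⟨z, hz⟩ := intermediate_value_univ x y hf ⟨hx, hy⟩
  exact h₀ z hz

lemma volume_le_of_forall_sub_le {s : Set ℝ} {d : ℝ}
    (h : ∀ u ∈ s, ∀ v ∈ s, u ≤ v → v - u ≤ d) : volume s ≤ ENNReal.ofReal d := by
  refine (Real.volume_le_diam s).trans (Metric.ediam_le fun u hu v hv => ?_)
  rw [edist_dist, Real.dist_eq]
  refine ENNReal.ofReal_le_ofReal ?_
  rcases le_total u v with huv | hvu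
  · rw [abs_sub_comm, abs_of_nonneg (sub_nonneg.2 huv)]
    exact h u hu v hv huv
  · rw [abs_of_nonneg (sub_nonneg.2 hvu)]
    exact h v hv u hu hvu

lemma volume_abs_sub_lt_le_of_mul_le_abs_sub {F : ℝ → ℝ} {T : Set ℝ} {m : ℝ} (hm : 0 < m)
    (hT : ∀ u ∈ T, ∀ v ∈ T, u ≤ v → m * (v - u) ≤ |F v - F u|) (q lam : ℝ) :
    volume {x ∈ T | |F x - q| < lam} ≤ ENNReal.ofReal (2 * lam / m) := by
  refine volume_le_of_forall_sub_le fun u hu v hv huv => ?_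
  rw [le_div_iff₀' hm]
  calc m * (v - u) ≤ |F v - F u| := hT u hu.1 v hv.1 huv
    _ ≤ |F v - q| + |q - F u| := abs_sub_le _ _ _
    _ ≤ 2 * lam := by rw [abs_sub_comm q]; linarith [hu.2, hv.2]

section SecondDerivative

variable {F F' F'' : ℝ → ℝ}

lemma mul_sub_le_deriv_sub_of_le_deriv2 (hF' : ∀ x, HasDerivAt F' (F'' x) x) {a : ℝ}
    (ha : ∀ x, a ≤ F'' x) {y z : ℝ} (hyz : y ≤ z) : a * (z - y) ≤ F' z - F' y := by
  have := sub_le_sub_of_hasDerivAt_le (fun x => hasDerivAt_mul_const a) hF' hyz fun x _ => ha x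
  linarith

lemma deriv_sub_le_mul_sub_of_deriv2_le (hF' : ∀ x, HasDerivAt F' (F'' x) x) {b : ℝ}
    (hb : ∀ x, F'' x ≤ b) {y z : ℝ} (hyz : y ≤ z) : F' z - F' y ≤ b * (z - y) := by
  have := sub_le_sub_of_hasDerivAt_le hF' (fun x => hasDerivAt_mul_const b) hyz fun x _ => hb x
  linarith

lemma sub_le_mul_sq_of_deriv2_le (hF : ∀ x, HasDerivAt F (F' x) x)
    (hF' : ∀ x, HasDerivAt F' (F'' x) x) {b x₀ : ℝ} (hb : ∀ x, F'' x ≤ b) (h₀ : F' x₀ = 0)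
    (x : ℝ) : F x - F x₀ ≤ b * (x - x₀) ^ 2 / 2 := by
  have hquad : ∀ y, HasDerivAt (fun y => b * (y - x₀) ^ 2 / 2) (b * (y - x₀)) y := fun y =>
    ((((hasDerivAt_id' y).sub_const x₀).fun_pow 2).const_mul b).div_const 2 |>.congr_deriv
      (by ring)
  rcases le_total x₀ x with hx | hx
  · have := sub_le_sub_of_hasDerivAt_le hF hquad hx fun y hy => by
      linarith [deriv_sub_le_mul_sub_of_deriv2_le hF' hb hy.1]
    simpa using this
  · have := sub_le_sub_of_hasDerivAt_le hquad hF hx fun y hy => by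
      linarith [deriv_sub_le_mul_sub_of_deriv2_le hF' hb hy.2]
    simp only [sub_self, zero_pow two_ne_zero, mul_zero, zero_div] at this
    linarith

lemma mul_sq_le_sub_of_le_deriv2 (hF : ∀ x, HasDerivAt F (F' x) x)
    (hF' : ∀ x, HasDerivAt F' (F'' x) x) {a x₀ : ℝ} (ha : ∀ x, a ≤ F'' x) (h₀ : F' x₀ = 0)
    (x : ℝ) : a * (x - x₀) ^ 2 / 2 ≤ F x - F x₀ := by
  have := sub_le_mul_sq_of_deriv2_le (fun x => (hF x).neg) (fun x => (hF' x).neg)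
    (fun x => neg_le_neg (ha x)) (x₀ := x₀) (by simp [h₀]) x
  simp only [Pi.neg_apply] at this
  linarith

lemma volume_abs_sub_lt_le_of_le_deriv2 (hF : ∀ x, HasDerivAt F (F' x) x)
    (hF' : ∀ x, HasDerivAt F' (F'' x) x) {a b x₀ q lam : ℝ} (ha : 0 < a)
    (hab : ∀ x, a ≤ F'' x ∧ F'' x ≤ b) (h₀ : F' x₀ = 0) (hlam : 0 < lam)
    (hN : 2 * lam ≤ |F x₀ - q|) :
    volume {x | |F x - q| < lam} ≤ ENNReal.ofReal (4 * lam / (a * √(|F x₀ - q| / b))) := by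
  set N := |F x₀ - q|
  set r := √(N / b)
  have hb : 0 < b := ha.trans_le ((hab x₀).1.trans (hab x₀).2)
  have hr : 0 < r := sqrt_pos.2 (div_pos (by linarith) hb)
  have hfar : ∀ x, |F x - q| < lam → r ≤ |x - x₀| := fun x hx => by
    have hup := sub_le_mul_sq_of_deriv2_le hF hF' (fun x => (hab x).2) h₀ x
    have hmin := mul_sq_le_sub_of_le_deriv2 hF hF' (fun x => (hab x).1) h₀ x
    have hN' : N ≤ |F x₀ - F x| + |F x - q| := abs_sub_le _ _ _
    rw [abs_sub_comm, abs_of_nonneg (by nlinarith)] at hN'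
    rw [← sqrt_sq_eq_abs]
    exact sqrt_le_sqrt ((div_le_iff₀ hb).2 (by nlinarith))
  have hright : ∀ u ∈ Ici (x₀ + r), ∀ v ∈ Ici (x₀ + r), u ≤ v →
      a * r * (v - u) ≤ |F v - F u| := fun u hu v _ huv => by
    have := sub_le_sub_of_hasDerivAt_le (fun x => hasDerivAt_mul_const (a * r)) hF huv
      fun y hy => by
        have := mul_sub_le_deriv_sub_of_le_deriv2 hF' (fun x => (hab x).1)
          (show x₀ ≤ y by linarith [hu.out, hy.1])
        nlinarith [hu.out, hy.1]
    linarith [le_abs_self (F v - F u)]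
  have hleft : ∀ u ∈ Iic (x₀ - r), ∀ v ∈ Iic (x₀ - r), u ≤ v →
      a * r * (v - u) ≤ |F v - F u| := fun u _ v hv huv => by
    have := sub_le_sub_of_hasDerivAt_le hF (fun x => hasDerivAt_mul_const (-(a * r))) huv
      fun y hy => by
        have := mul_sub_le_deriv_sub_of_le_deriv2 hF' (fun x => (hab x).1)
          (show y ≤ x₀ by linarith [hv.out, hy.2])
        nlinarith [hv.out, hy.2]
    linarith [neg_abs_le (F v - F u)]
  have hcover : {x | |F x - q| < lam} ⊆
      {x ∈ Iic (x₀ - r) | |F x - q| < lam} ∪ {x ∈ Ici (x₀ + r) | |F x - q| < lam} :=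
    fun x hx => by
      rcases le_abs'.1 (hfar x hx) with h | h
      · exact Or.inl ⟨by simp only [mem_Iic]; linarith, hx⟩
      · exact Or.inr ⟨by simp only [mem_Ici]; linarith, hx⟩
  have hm : 0 < a * r := mul_pos ha hr
  calc volume {x | |F x - q| < lam}
      ≤ volume {x ∈ Iic (x₀ - r) | |F x - q| < lam} + volume {x ∈ Ici (x₀ + r) | |F x - q| < lam} :=
        (measure_mono hcover).trans (measure_union_le _ _)
    _ ≤ ENNReal.ofReal (2 * lam / (a * r)) + ENNReal.ofReal (2 * lam / (a * r)) :=
        add_le_add (volume_abs_sub_lt_le_of_mul_le_abs_sub hm hleft q lam)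
          (volume_abs_sub_lt_le_of_mul_le_abs_sub hm hright q lam)
    _ = ENNReal.ofReal (4 * lam / (a * r)) := by
        rw [← ENNReal.ofReal_add (by positivity) (by positivity)]
        ring_nf

lemma volume_abs_sub_lt_le_of_le_abs_deriv2 (hF : ∀ x, HasDerivAt F (F' x) x)
    (hF' : ∀ x, HasDerivAt F' (F'' x) x) (hF'' : Continuous F'') {a b x₀ q lam : ℝ}
    (ha : 0 < a) (hab : ∀ x, a ≤ |F'' x| ∧ |F'' x| ≤ b) (h₀ : F' x₀ = 0) (hlam : 0 < lam)
    (hN : 2 * lam ≤ |F x₀ - q|) :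
    volume {x | |F x - q| < lam} ≤ ENNReal.ofReal (4 * lam / (a * √(|F x₀ - q| / b))) := by
  have hne : ∀ x, F'' x ≠ 0 := fun x h => by linarith [(hab x).1, h ▸ abs_zero (α := ℝ)]
  rcases hF''.forall_pos_or_forall_neg hne with hpos | hneg
  · exact volume_abs_sub_lt_le_of_le_deriv2 hF hF' ha
      (fun x => by simpa only [abs_of_pos (hpos x)] using hab x) h₀ hlam hN
  · have hflip : ∀ x, |-F x - -q| = |F x - q| := fun x => by rw [← neg_sub', abs_neg]
    have := volume_abs_sub_lt_le_of_le_deriv2 (fun x => (hF x).neg) (fun x => (hF' x).neg) ha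
      (fun x => by simpa only [abs_of_neg (hneg x)] using hab x) (x₀ := x₀) (q := -q)
      (by simp [h₀]) hlam (by simpa only [Pi.neg_apply, hflip] using hN)
    simpa only [Pi.neg_apply, hflip] using this

end SecondDerivative

theorem mu_p0_bound_large_norm
    (c₁ c₂ : ℝ) (hc₁ : 0 < c₁) (hc₁₂ : c₁ ≤ c₂) :
    ∃ K : ℝ, 0 < K ∧
      ∀ (ξ η : ℝ), ξ ≤ η →
      ∀ (f f' f'' : ℝ → ℝ),
        (∀ x, HasDerivAt f (f' x) x) →
        (∀ x, HasDerivAt f' (f'' x) x) →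
        Continuous f'' →
        (∀ x, c₁ ≤ |f'' x| ∧ |f'' x| ≤ c₂) →
      ∀ Mmax : ℝ, IsGreatest ((fun x => |f' x|) '' Icc ξ η) Mmax →
      ∀ j₁ j₂ : ℤ, j₂ ≠ 0 → |(j₁ : ℝ)| ≤ 2 * (1 + Mmax) * |(j₂ : ℝ)| →
      ∀ x₀ : ℝ, (j₁ : ℝ) + (j₂ : ℝ) * f' x₀ = 0 →
      ∀ p₀ : ℤ,
        -(1/2) < ((j₁ : ℝ) * x₀ + (j₂ : ℝ) * f x₀) - (p₀ : ℝ) →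
        ((j₁ : ℝ) * x₀ + (j₂ : ℝ) * f x₀) - (p₀ : ℝ) ≤ 1/2 →
      ∀ lam : ℝ, 0 < lam → lam ≤ 1/8 →
        2 * lam ≤ nint ((j₁ : ℝ) * x₀ + (j₂ : ℝ) * f x₀) →
        (volume {x ∈ Icc ξ η | |(j₁ : ℝ) * x + (j₂ : ℝ) * f x - (p₀ : ℝ)| < lam}).toReal
          ≤ K * lam * |(j₂ : ℝ)| ^ (-(1 : ℝ)/2) *
              (nint ((j₁ : ℝ) * x₀ + (j₂ : ℝ) * f x₀)) ^ (-(1 : ℝ)/2) := by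
  have hc₂ : 0 < c₂ := hc₁.trans_le hc₁₂
  refine ⟨4 * √c₂ / c₁, by positivity, ?_⟩
  intro ξ η _ f f' f'' hf hf' hf'' hbound _ _ j₁ j₂ hj₂ _ x₀ hx₀ p₀ _ _ lam hlam _ hnint
  set y := (j₁ : ℝ) * x₀ + (j₂ : ℝ) * f x₀
  set J := |(j₂ : ℝ)|
  have hJ : 0 < J := abs_pos.2 (Int.cast_ne_zero.2 hj₂)
  have hnint_pos : 0 < nint y := by linarith
  have hN : nint y ≤ |y - p₀| := round_le y p₀
  have hphase : ∀ x, HasDerivAt (fun x => j₁ * x + j₂ * f x) (j₁ + j₂ * f' x) x := fun x =>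
    ((hasDerivAt_id x).const_mul _).add ((hf x).const_mul _) |>.congr_deriv (by simp)
  have hbound' : ∀ x, c₁ * J ≤ |j₂ * f'' x| ∧ |j₂ * f'' x| ≤ c₂ * J := fun x => by
    rw [abs_mul, mul_comm c₁, mul_comm c₂]
    exact ⟨by gcongr; exact (hbound x).1, by gcongr; exact (hbound x).2⟩
  have hvol := volume_abs_sub_lt_le_of_le_abs_deriv2 hphase
    (fun x => ((hf' x).const_mul _).const_add _) (hf''.const_mul _) (mul_pos hc₁ hJ) hbound'
    hx₀ hlam (hnint.trans hN)
  have hrpow : ∀ x : ℝ, 0 ≤ x → x ^ (-(1 : ℝ) / 2) = (√x)⁻¹ := fun x hx => by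
    rw [neg_div, rpow_neg hx, sqrt_eq_rpow]
  refine ENNReal.toReal_le_of_le_ofReal (by positivity)
    ((measure_mono fun x hx => hx.2).trans (hvol.trans (ENNReal.ofReal_le_ofReal ?_)))
  calc 4 * lam / (c₁ * J * √(|y - p₀| / (c₂ * J)))
      = 4 * √c₂ / c₁ * lam * J ^ (-(1 : ℝ) / 2) * |y - p₀| ^ (-(1 : ℝ) / 2) := by
        rw [hrpow J hJ.le, hrpow _ (abs_nonneg _), sqrt_div (abs_nonneg _), sqrt_mul hc₂.le]
        field_simp
        rw [sq_sqrt hJ.le]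
    _ ≤ 4 * √c₂ / c₁ * lam * J ^ (-(1 : ℝ) / 2) * nint y ^ (-(1 : ℝ) / 2) := by
        gcongr _ * ?_
        exact rpow_le_rpow_of_nonpos hnint_pos hN (by norm_num)
end

section
/- For every pair (j₁,j₂) ∈ Θ₂ and every λ ∈ (0,1/8] with ‖F(x₀)‖ < 2λ, one has |μ(j₁,j₂,p₀,λ)| ≤ K (λ/|j₂|)^{1/2}, where K is a constant depending only on c₁ and c₂. -/
open Set Real MeasureTheory

/-! The phase `F x = j₁ x + j₂ f x` has `|F''| ≥ c₁ |j₂|` of constant sign and `F'(x₀) = 0`, so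
`|F x - F x₀| ≥ c₁ |j₂| (x - x₀)² / 2`. Since `p₀` is the integer nearest to `F x₀`, the hypothesis
on `‖F x₀‖` gives `|F x₀ - p₀| < 2λ`; hence `|F x - p₀| < λ` forces `c₁ |j₂| (x - x₀)² < 6λ`, and
the set lies in an interval of length `2 √(6λ / (c₁ |j₂|))` around `x₀`. -/

theorem nint_eq_abs_sub_of_abs_sub_le_half {y : ℝ} {p : ℤ} (hp : |y - p| ≤ 1 / 2) :
    nint y = |y - p| := by
  refine le_antisymm (round_le y p) (not_lt.1 fun hlt => ?_)
  have hne : round y ≠ p := by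
    rintro rfl
    exact lt_irrefl _ hlt
  have hone : (1 : ℝ) ≤ |((round y - p : ℤ) : ℝ)| := by
    exact_mod_cast Int.one_le_abs (sub_ne_zero.2 hne)
  have htri : |((round y - p : ℤ) : ℝ)| ≤ nint y + |y - p| := by
    push_cast
    simpa [nint, abs_sub_comm] using abs_sub_le (round y : ℝ) y p
  linarith

theorem forall_le_or_forall_le_neg_of_le_abs {X : Type*} [TopologicalSpace X]
    [PreconnectedSpace X] {g : X → ℝ} {c : ℝ} (hg : Continuous g) (hc : 0 < c)
    (h : ∀ x, c ≤ |g x|) : (∀ x, c ≤ g x) ∨ ∀ x, c ≤ -g x := by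
  by_contra! hsign
  obtain ⟨⟨a, ha⟩, ⟨b, hb⟩⟩ := hsign
  have hga : g a ≤ -c := (le_abs'.1 (h a)).resolve_right ha.not_ge
  have hgb : c ≤ g b := (le_abs.1 (h b)).resolve_right hb.not_ge
  obtain ⟨z, hz⟩ := intermediate_value_univ a b hg
    (show (0 : ℝ) ∈ Icc (g a) (g b) from ⟨by linarith, by linarith⟩)
  have := h z
  rw [hz, abs_zero] at this
  linarith

section QuadraticGrowth

variable {F F' F'' : ℝ → ℝ} {c x₀ : ℝ}

theorem add_mul_sq_le_of_le_deriv2 (hF : ∀ x, HasDerivAt F (F' x) x)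
    (hF' : ∀ x, HasDerivAt F' (F'' x) x) (hc : ∀ x, c ≤ F'' x) (hx₀ : F' x₀ = 0) (x : ℝ) :
    F x₀ + c / 2 * (x - x₀) ^ 2 ≤ F x := by
  set G : ℝ → ℝ := fun x => F x - c / 2 * (x - x₀) ^ 2
  set G' : ℝ → ℝ := fun x => F' x - c * (x - x₀)
  have hG : ∀ x, HasDerivAt G (G' x) x := fun x => by
    refine ((hF x).fun_sub ((((hasDerivAt_id x).sub_const x₀).fun_pow 2).const_mul (c / 2))
      ).congr_deriv ?_
    simp only [G', id]
    ring
  have hG' : ∀ x, HasDerivAt G' (F'' x - c) x := fun x => by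
    simpa using (hF' x).fun_sub (((hasDerivAt_id x).sub_const x₀).const_mul c)
  have hconvex : ConvexOn ℝ univ G := by
    refine Monotone.convexOn_univ_of_deriv (fun x => (hG x).differentiableAt) ?_
    rw [show deriv G = G' from funext fun x => (hG x).deriv]
    exact monotone_of_hasDerivAt_nonneg hG' fun x => sub_nonneg.2 (hc x)
  have hmin : IsMinOn G univ x₀ := by
    refine hconvex.isMinOn_of_rightDeriv_eq_zero (by simp) ?_
    rw [(hG x₀).hasDerivWithinAt.derivWithin (uniqueDiffWithinAt_Ioi x₀)]
    simp [G', hx₀]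
  have : G x₀ ≤ G x := hmin (mem_univ x)
  norm_num [G] at this
  linarith

theorem mul_sq_le_abs_sub_of_le_abs_deriv2_s12 (hF : ∀ x, HasDerivAt F (F' x) x)
    (hF' : ∀ x, HasDerivAt F' (F'' x) x) (hF'' : Continuous F'') (hc : 0 < c)
    (hcF'' : ∀ x, c ≤ |F'' x|) (hx₀ : F' x₀ = 0) (x : ℝ) :
    c / 2 * (x - x₀) ^ 2 ≤ |F x - F x₀| := by
  rcases forall_le_or_forall_le_neg_of_le_abs hF'' hc hcF'' with hpos | hneg
  · have := add_mul_sq_le_of_le_deriv2 hF hF' hpos hx₀ x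
    exact (le_abs_self _).trans' (by linarith)
  · have := add_mul_sq_le_of_le_deriv2 (F' := -F') (x₀ := x₀) (fun x => (hF x).neg)
      (fun x => (hF' x).neg) hneg (by simp [hx₀]) x
    simp only [Pi.neg_apply] at this
    exact (neg_le_abs _).trans' (by linarith)

end QuadraticGrowth

theorem toReal_volume_le_of_forall_mul_sq_le {S : Set ℝ} {c δ x₀ : ℝ} (hc : 0 < c)
    (hS : ∀ x ∈ S, c * (x - x₀) ^ 2 ≤ δ) : (volume S).toReal ≤ 2 * √(δ / c) := by
  have hsub : S ⊆ Metric.closedBall x₀ √(δ / c) := fun x hx => by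
    rw [Metric.mem_closedBall, Real.dist_eq]
    exact Real.abs_le_sqrt (by rw [le_div_iff₀ hc, mul_comm]; exact hS x hx)
  calc (volume S).toReal ≤ (volume (Metric.closedBall x₀ √(δ / c))).toReal :=
        ENNReal.toReal_mono measure_closedBall_lt_top.ne (measure_mono hsub)
    _ = 2 * √(δ / c) := by
        rw [Real.volume_closedBall, ENNReal.toReal_ofReal (by positivity)]

theorem mu_p0_bound_small_norm_general
    (c₁ c₂ : ℝ) (hc₁ : 0 < c₁) :
    ∃ K : ℝ, 0 < K ∧
      ∀ (ξ η : ℝ), ξ ≤ η →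
      ∀ (f f' f'' : ℝ → ℝ),
        (∀ x, HasDerivAt f (f' x) x) →
        (∀ x, HasDerivAt f' (f'' x) x) →
        Continuous f'' →
        (∀ x, c₁ ≤ |f'' x| ∧ |f'' x| ≤ c₂) →
      ∀ Mmax : ℝ, IsGreatest ((fun x => |f' x|) '' Icc ξ η) Mmax →
      ∀ j₁ j₂ : ℤ, j₂ ≠ 0 → |(j₁ : ℝ)| ≤ 2 * (1 + Mmax) * |(j₂ : ℝ)| →
      ∀ x₀ : ℝ, (j₁ : ℝ) + (j₂ : ℝ) * f' x₀ = 0 →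
      ∀ p₀ : ℤ,
        -(1/2) < ((j₁ : ℝ) * x₀ + (j₂ : ℝ) * f x₀) - (p₀ : ℝ) →
        ((j₁ : ℝ) * x₀ + (j₂ : ℝ) * f x₀) - (p₀ : ℝ) ≤ 1/2 →
      ∀ lam : ℝ, 0 < lam → lam ≤ 1/8 →
        nint ((j₁ : ℝ) * x₀ + (j₂ : ℝ) * f x₀) < 2 * lam →
        (volume {x ∈ Icc ξ η | |(j₁ : ℝ) * x + (j₂ : ℝ) * f x - (p₀ : ℝ)| < lam}).toReal
          ≤ K * (lam / |(j₂ : ℝ)|) ^ ((1 : ℝ)/2) := by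
  refine ⟨2 * √(6 / c₁), by positivity, ?_⟩
  intro ξ η _ f f' f'' hf hf' hf'' hbound _ _ j₁ j₂ hj₂ _ x₀ hx₀ p₀ hp₀l hp₀r lam _ _ hnint
  set F : ℝ → ℝ := fun x => (j₁ : ℝ) * x + (j₂ : ℝ) * f x
  have hJ : 0 < |(j₂ : ℝ)| := abs_pos.2 (Int.cast_ne_zero.2 hj₂)
  have hF : ∀ x, HasDerivAt F (j₁ + j₂ * f' x) x := fun x => by
    simpa using ((hasDerivAt_id x).const_mul (j₁ : ℝ)).fun_add ((hf x).const_mul (j₂ : ℝ))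
  have hF' : ∀ x, HasDerivAt (fun x => (j₁ : ℝ) + j₂ * f' x) (j₂ * f'' x) x := fun x =>
    ((hf' x).const_mul (j₂ : ℝ)).const_add _
  have hgrowth := mul_sq_le_abs_sub_of_le_abs_deriv2_s12 hF hF' (continuous_const.mul hf'')
    (mul_pos hc₁ hJ) (fun x => by rw [abs_mul, mul_comm]; gcongr; exact (hbound x).1) hx₀
  have hcentre : |F x₀ - p₀| < 2 * lam := by
    rwa [← nint_eq_abs_sub_of_abs_sub_le_half (abs_le.2 ⟨hp₀l.le, hp₀r⟩)]
  calc _ ≤ 2 * √(6 * lam / (c₁ * |(j₂ : ℝ)|)) :=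
        toReal_volume_le_of_forall_mul_sq_le (x₀ := x₀) (mul_pos hc₁ hJ) fun x hx => by
          have hx' : |F x - p₀| < lam := hx.2
          have := (hgrowth x).trans (abs_sub_le (F x) p₀ (F x₀))
          rw [abs_sub_comm (p₀ : ℝ)] at this
          linarith
    _ = 2 * √(6 / c₁) * (lam / |(j₂ : ℝ)|) ^ ((1 : ℝ) / 2) := by
        rw [← Real.sqrt_eq_rpow, mul_assoc, ← Real.sqrt_mul (by positivity), mul_div_mul_comm]

theorem mu_p0_bound_small_norm
    (c₁ c₂ : ℝ) (hc₁ : 0 < c₁) (hc₁₂ : c₁ ≤ c₂) :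
    ∃ K : ℝ, 0 < K ∧
      ∀ (ξ η : ℝ), ξ ≤ η →
      ∀ (f f' f'' : ℝ → ℝ),
        (∀ x, HasDerivAt f (f' x) x) →
        (∀ x, HasDerivAt f' (f'' x) x) →
        Continuous f'' →
        (∀ x, c₁ ≤ |f'' x| ∧ |f'' x| ≤ c₂) →
      ∀ Mmax : ℝ, IsGreatest ((fun x => |f' x|) '' Icc ξ η) Mmax →
      ∀ j₁ j₂ : ℤ, j₂ ≠ 0 → |(j₁ : ℝ)| ≤ 2 * (1 + Mmax) * |(j₂ : ℝ)| →
      ∀ x₀ : ℝ, (j₁ : ℝ) + (j₂ : ℝ) * f' x₀ = 0 →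
      ∀ p₀ : ℤ,
        -(1/2) < ((j₁ : ℝ) * x₀ + (j₂ : ℝ) * f x₀) - (p₀ : ℝ) →
        ((j₁ : ℝ) * x₀ + (j₂ : ℝ) * f x₀) - (p₀ : ℝ) ≤ 1/2 →
      ∀ lam : ℝ, 0 < lam → lam ≤ 1/8 →
        nint ((j₁ : ℝ) * x₀ + (j₂ : ℝ) * f x₀) < 2 * lam →
        (volume {x ∈ Icc ξ η | |(j₁ : ℝ) * x + (j₂ : ℝ) * f x - (p₀ : ℝ)| < lam}).toReal
          ≤ K * (lam / |(j₂ : ℝ)|) ^ ((1 : ℝ)/2) :=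
  mu_p0_bound_small_norm_general c₁ c₂ hc₁
end

section
/- Let q ≥ 1 be an integer and δ ∈ (0,1/2) with δ ≥ 2c₄/q (so that q₀ ≥ 1). Then B₂(q, δ/2) ≤ A(q,δ) ≤ B₁(q, 3δ/2). -/
open Set Real

/-!
Write `a = q₀ s + a₀` with `0 ≤ a₀ < q₀`. By Taylor's theorem, `q fᵢ(a/q)` differs from its
linearisation `q fᵢ(q₀ s/q) + a₀ fᵢ'(q₀ s/q)` at the start of the block by at most
`c₄ a₀² / q ≤ c₄ q₀² / q ≤ δ/2`, the last inequality being what the choice of `q₀` is made for.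
Since `‖·‖` is 1-Lipschitz, the conditions defining `A(q,δ)` and `B(q,δ',s)` imply each other up to
a loss of `δ/2`. Division with remainder by `q₀` then injects the points counted by `A` into the
blocks `0 ≤ s ≤ r`, and the points of the blocks `s < r` into `[0, q]`.
-/

theorem nint_le_nint_add_abs_sub (x y : ℝ) : nint x ≤ nint y + |x - y| :=
  calc |x - round x| ≤ |x - round y| := round_le x (round y)
    _ = |(y - round y) + (x - y)| := by ring_nf
    _ ≤ |y - round y| + |x - y| := abs_add_le _ _

theorem abs_nint_sub_nint_le (x y : ℝ) : |nint x - nint y| ≤ |x - y| :=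
  abs_sub_le_iff.2 ⟨by linarith [nint_le_nint_add_abs_sub x y],
    by linarith [nint_le_nint_add_abs_sub y x, abs_sub_comm x y]⟩

theorem abs_sub_sub_mul_le_of_hasDerivWithinAt {f f' f'' : ℝ → ℝ} {C c b : ℝ} (hcb : c ≤ b)
    (hf : ∀ x ∈ Icc c b, HasDerivWithinAt f (f' x) (Icc c b) x)
    (hf' : ∀ x ∈ Icc c b, HasDerivWithinAt f' (f'' x) (Icc c b) x)
    (hC : ∀ x ∈ Icc c b, |f'' x| ≤ C) :
    |f b - f c - (b - c) * f' c| ≤ C * (b - c) ^ 2 := by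
  have hc : c ∈ Icc c b := left_mem_Icc.2 hcb
  have hC0 : 0 ≤ C := (abs_nonneg _).trans (hC c hc)
  have hf'_near : ∀ x ∈ Icc c b, ‖f' x - f' c‖ ≤ C * (b - c) := fun x hx =>
    calc ‖f' x - f' c‖ ≤ C * ‖x - c‖ :=
          (convex_Icc c b).norm_image_sub_le_of_norm_hasDerivWithin_le hf' hC hc hx
      _ ≤ C * (b - c) := by
          rw [Real.norm_of_nonneg (by linarith [hx.1])]; gcongr; exact hx.2
  have hlin : ∀ x ∈ Icc c b,
      HasDerivWithinAt (fun y => f y - f' c * y) (f' x - f' c) (Icc c b) x := fun x hx =>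
    (hf x hx).sub (by simpa using (hasDerivWithinAt_id x _).const_mul (f' c))
  calc |f b - f c - (b - c) * f' c| = ‖(f b - f' c * b) - (f c - f' c * c)‖ := by
        rw [Real.norm_eq_abs]; ring_nf
    _ ≤ C * (b - c) * ‖b - c‖ := (convex_Icc c b).norm_image_sub_le_of_norm_hasDerivWithin_le
        hlin hf'_near hc (right_mem_Icc.2 hcb)
    _ = C * (b - c) ^ 2 := by rw [Real.norm_of_nonneg (sub_nonneg.2 hcb)]; ring

theorem abs_nint_sub_nint_taylor_le {g g' g'' : ℝ → ℝ} {C : ℝ}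
    (hg : ∀ x ∈ Icc (0:ℝ) 1, HasDerivWithinAt g (g' x) (Icc 0 1) x)
    (hg' : ∀ x ∈ Icc (0:ℝ) 1, HasDerivWithinAt g' (g'' x) (Icc 0 1) x)
    (hC : ∀ x ∈ Icc (0:ℝ) 1, |g'' x| ≤ C) {q m a : ℝ} (hq : 0 < q) (hm : 0 ≤ m) (ha : 0 ≤ a)
    (hma : m + a ≤ q) :
    |nint (q * g ((m + a) / q)) - nint (q * g (m / q) + a * g' (m / q))| ≤ C * a ^ 2 / q := by
  set c := m / q
  set b := (m + a) / q
  have hcb : c ≤ b := div_le_div_of_nonneg_right (by linarith) hq.le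
  have hsub : Icc c b ⊆ Icc 0 1 := Icc_subset_Icc (by positivity) ((div_le_one hq).2 hma)
  have hbc : b - c = a / q := by ring
  have htaylor := abs_sub_sub_mul_le_of_hasDerivWithinAt hcb
    (fun x hx => (hg x (hsub hx)).mono hsub) (fun x hx => (hg' x (hsub hx)).mono hsub)
    (fun x hx => hC x (hsub hx))
  calc _ ≤ |q * g b - (q * g c + a * g' c)| := abs_nint_sub_nint_le _ _
    _ = q * |g b - g c - (b - c) * g' c| := by
        rw [hbc, ← abs_of_pos hq, ← abs_mul, abs_of_pos hq]; congr 1; field_simp; ring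
    _ ≤ q * (C * (b - c) ^ 2) := by gcongr
    _ = C * a ^ 2 / q := by rw [hbc]; field_simp

theorem abs_nint_sub_nint_taylor_block_le {g g' g'' : ℝ → ℝ} {C : ℝ}
    (hg : ∀ x ∈ Icc (0:ℝ) 1, HasDerivWithinAt g (g' x) (Icc 0 1) x)
    (hg' : ∀ x ∈ Icc (0:ℝ) 1, HasDerivWithinAt g' (g'' x) (Icc 0 1) x)
    (hC : ∀ x ∈ Icc (0:ℝ) 1, |g'' x| ≤ C) {q : ℕ} (hq : 0 < q) {q₀ s a₀ : ℤ} (hs : 0 ≤ s)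
    (ha₀ : 0 ≤ a₀) (ha₀q₀ : a₀ < q₀) (hle : q₀ * s + a₀ ≤ q) :
    |nint (q * g (((q₀ * s + a₀ : ℤ) : ℝ) / q))
      - nint (q * g (q₀ * s / q) + a₀ * g' (q₀ * s / q))| ≤ C * q₀ ^ 2 / q := by
  have hC0 : 0 ≤ C := (abs_nonneg _).trans (hC 0 (left_mem_Icc.2 zero_le_one))
  have hq' : (0:ℝ) < q := by exact_mod_cast hq
  have hs' : (0:ℝ) ≤ s := by exact_mod_cast hs
  have ha₀' : (0:ℝ) ≤ a₀ := by exact_mod_cast ha₀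
  have ha₀q₀' : (a₀:ℝ) ≤ q₀ := by exact_mod_cast ha₀q₀.le
  have hq₀ : (0:ℝ) ≤ q₀ := ha₀'.trans ha₀q₀'
  have hle' : (q₀ * s + a₀ : ℝ) ≤ q := by exact_mod_cast hle
  push_cast
  calc _ ≤ C * a₀ ^ 2 / q :=
        abs_nint_sub_nint_taylor_le hg hg' hC hq' (mul_nonneg hq₀ hs') ha₀' hle'
    _ ≤ C * q₀ ^ 2 / q := by gcongr

theorem ncard_setOf_le_lt_eq_card_filter (lo hi : ℤ) (P : ℤ → Prop) [DecidablePred P] :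
    {a | lo ≤ a ∧ a < hi ∧ P a}.ncard = ((Finset.Ico lo hi).filter P).card := by
  rw [← Set.ncard_coe_finset]; congr; ext; simp [and_assoc]

theorem ncard_setOf_le_le_eq_card_filter (lo hi : ℤ) (P : ℤ → Prop) [DecidablePred P] :
    {a | lo ≤ a ∧ a ≤ hi ∧ P a}.ncard = ((Finset.Icc lo hi).filter P).card := by
  rw [← Set.ncard_coe_finset]; congr; ext; simp [and_assoc]

theorem mul_add_ediv_emod_eq {q₀ a₀ : ℤ} (s : ℤ) (hq₀ : 0 < q₀) (ha₀ : 0 ≤ a₀) (ha₀q₀ : a₀ < q₀) :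
    (q₀ * s + a₀) / q₀ = s ∧ (q₀ * s + a₀) % q₀ = a₀ :=
  (Int.ediv_emod_unique hq₀).2 ⟨by ring, ha₀, ha₀q₀⟩

section DivisionWithRemainder

variable {q₀ N : ℤ} (P : ℤ → ℤ → Prop) (Q : ℤ → Prop)

theorem sum_Ico_ncard_le_ncard_of_mul_add (hq₀ : 0 < q₀) {r : ℤ} (hr : q₀ * r ≤ N)
    (himp : ∀ s a₀, 0 ≤ s → 0 ≤ a₀ → a₀ < q₀ → q₀ * s + a₀ ≤ N → P s a₀ → Q (q₀ * s + a₀)) :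
    ∑ s ∈ Finset.Ico 0 r, {a₀ | 0 ≤ a₀ ∧ a₀ < q₀ ∧ P s a₀}.ncard
      ≤ {a | 0 ≤ a ∧ a ≤ N ∧ Q a}.ncard := by
  classical
  simp only [ncard_setOf_le_lt_eq_card_filter, ncard_setOf_le_le_eq_card_filter,
    ← Finset.card_sigma]
  refine Finset.card_le_card_of_injOn (fun p => q₀ * p.1 + p.2) ?_ ?_
  · rintro ⟨s, a₀⟩ hp
    simp only [Finset.mem_coe, Finset.mem_sigma, Finset.mem_Ico, Finset.mem_filter] at hp
    obtain ⟨⟨hs, hsr⟩, ⟨ha₀, ha₀q₀⟩, hP⟩ := hp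
    have hle : q₀ * s + a₀ ≤ N := by nlinarith
    simp only [Finset.mem_coe, Finset.mem_filter, Finset.mem_Icc]
    exact ⟨⟨by positivity, hle⟩, himp s a₀ hs ha₀ ha₀q₀ hle hP⟩
  · rintro ⟨s, a₀⟩ hp ⟨s', a₀'⟩ hp' h
    simp only [Finset.mem_coe, Finset.mem_sigma, Finset.mem_Ico, Finset.mem_filter] at hp hp' h
    obtain ⟨hs, ha₀⟩ := mul_add_ediv_emod_eq s hq₀ hp.2.1.1 hp.2.1.2
    obtain ⟨hs', ha₀'⟩ := mul_add_ediv_emod_eq s' hq₀ hp'.2.1.1 hp'.2.1.2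
    rw [h] at hs ha₀
    obtain rfl := hs.symm.trans hs'
    obtain rfl := ha₀.symm.trans ha₀'
    rfl

theorem ncard_le_sum_Icc_ncard_of_mul_add (hq₀ : 0 < q₀) {r : ℤ} (hr : N / q₀ ≤ r)
    (himp : ∀ s a₀, 0 ≤ s → 0 ≤ a₀ → a₀ < q₀ → q₀ * s + a₀ ≤ N → Q (q₀ * s + a₀) → P s a₀) :
    {a | 0 ≤ a ∧ a ≤ N ∧ Q a}.ncard
      ≤ ∑ s ∈ Finset.Icc 0 r, {a₀ | 0 ≤ a₀ ∧ a₀ < q₀ ∧ P s a₀}.ncard := by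
  classical
  simp only [ncard_setOf_le_lt_eq_card_filter, ncard_setOf_le_le_eq_card_filter,
    ← Finset.card_sigma]
  refine Finset.card_le_card_of_injOn (fun a => ⟨a / q₀, a % q₀⟩) ?_ ?_
  · intro a ha
    simp only [Finset.mem_coe, Finset.mem_filter, Finset.mem_Icc] at ha
    obtain ⟨⟨ha0, haN⟩, hQ⟩ := ha
    have hdiv := Int.mul_ediv_add_emod a q₀
    simp only [Finset.mem_coe, Finset.mem_sigma, Finset.mem_Ico, Finset.mem_filter, Finset.mem_Icc]
    refine ⟨⟨Int.ediv_nonneg ha0 hq₀.le, (Int.ediv_le_ediv hq₀ haN).trans hr⟩,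
      ⟨Int.emod_nonneg a hq₀.ne', Int.emod_lt_of_pos a hq₀⟩, ?_⟩
    exact himp _ _ (Int.ediv_nonneg ha0 hq₀.le) (Int.emod_nonneg a hq₀.ne')
      (Int.emod_lt_of_pos a hq₀) (by rwa [hdiv]) (by rwa [hdiv])
  · intro a _ b _ h
    simp only [Sigma.mk.injEq, heq_eq_eq] at h
    rw [← Int.mul_ediv_add_emod a q₀, ← Int.mul_ediv_add_emod b q₀, h.1, h.2]

end DivisionWithRemainder

theorem one_le_floor_sqrt {x : ℝ} (hx : 1 ≤ x) : 1 ≤ ⌊√x⌋ :=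
  Int.le_floor.2 (by simpa using Real.one_le_sqrt.2 hx)

theorem floor_sqrt_sq_le {x : ℝ} (hx : 0 ≤ x) : (⌊√x⌋ : ℝ) ^ 2 ≤ x :=
  calc (⌊√x⌋ : ℝ) ^ 2 ≤ √x ^ 2 := by
        gcongr; exact Int.floor_le _
    _ = x := Real.sq_sqrt hx

theorem one_le_floor_sqrt_and_mul_sq_div_le {c q δ : ℝ} (hc : 0 < c) (hq : 0 < q)
    (hδq : 2 * c / q ≤ δ) :
    1 ≤ ⌊√(δ * q / (2 * c))⌋ ∧ c * (⌊√(δ * q / (2 * c))⌋ : ℝ) ^ 2 / q ≤ δ / 2 := by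
  have hratio : 1 ≤ δ * q / (2 * c) := by
    rw [le_div_iff₀ (by positivity)]; rw [div_le_iff₀ hq] at hδq; linarith
  refine ⟨one_le_floor_sqrt hratio, ?_⟩
  calc c * (⌊√(δ * q / (2 * c))⌋ : ℝ) ^ 2 / q ≤ c * (δ * q / (2 * c)) / q := by
        gcongr; exact floor_sqrt_sq_le (by linarith)
    _ = δ / 2 := by field_simp

theorem A_sandwiched_by_B_general
    (f₁ f₁' f₁'' f₁''' f₂ f₂' f₂'' f₂''' : ℝ → ℝ)
    (hf₁ : ∀ x ∈ Icc (0:ℝ) 1, HasDerivWithinAt f₁ (f₁' x) (Icc (0:ℝ) 1) x)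
    (hf₁' : ∀ x ∈ Icc (0:ℝ) 1, HasDerivWithinAt f₁' (f₁'' x) (Icc (0:ℝ) 1) x)
    (hf₂ : ∀ x ∈ Icc (0:ℝ) 1, HasDerivWithinAt f₂ (f₂' x) (Icc (0:ℝ) 1) x)
    (hf₂' : ∀ x ∈ Icc (0:ℝ) 1, HasDerivWithinAt f₂' (f₂'' x) (Icc (0:ℝ) 1) x)
    (c₄ : ℝ)
    (hc₄ : IsGreatest (insert 1
      ((fun x => max (max (max |f₁ x| |f₁' x|) (max |f₁'' x| |f₁''' x|))
        (max (max |f₂ x| |f₂' x|) (max |f₂'' x| |f₂''' x|))) '' Icc (0:ℝ) 1)) c₄)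
    (q : ℕ) (hq : 1 ≤ q) (δ : ℝ)
    (hδq : 2 * c₄ / q ≤ δ)
    (q₀ r : ℤ)
    (hq₀ : q₀ = ⌊Real.sqrt (δ * q / (2 * c₄))⌋)
    (hr : r = ⌊(q : ℝ) / (q₀ : ℝ)⌋) :
    (∑ s ∈ Finset.Ico (0:ℤ) r,
      {a₀ : ℤ | 0 ≤ a₀ ∧ a₀ < q₀ ∧
        nint ((q : ℝ) * f₁ ((q₀ : ℝ) * s / q) + (a₀ : ℝ) * f₁' ((q₀ : ℝ) * s / q)) < δ/2 ∧
        nint ((q : ℝ) * f₂ ((q₀ : ℝ) * s / q) + (a₀ : ℝ) * f₂' ((q₀ : ℝ) * s / q)) < δ/2}.ncard)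
      ≤ {a : ℤ | 0 ≤ a ∧ (a : ℝ) ≤ q ∧
          nint ((q : ℝ) * f₁ ((a : ℝ) / q)) < δ ∧
          nint ((q : ℝ) * f₂ ((a : ℝ) / q)) < δ}.ncard
    ∧
    {a : ℤ | 0 ≤ a ∧ (a : ℝ) ≤ q ∧
        nint ((q : ℝ) * f₁ ((a : ℝ) / q)) < δ ∧
        nint ((q : ℝ) * f₂ ((a : ℝ) / q)) < δ}.ncard
      ≤ ∑ s ∈ Finset.Icc (0:ℤ) r,
        {a₀ : ℤ | 0 ≤ a₀ ∧ a₀ < q₀ ∧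
          nint ((q : ℝ) * f₁ ((q₀ : ℝ) * s / q) + (a₀ : ℝ) * f₁' ((q₀ : ℝ) * s / q)) < 3*δ/2 ∧
          nint ((q : ℝ) * f₂ ((q₀ : ℝ) * s / q) + (a₀ : ℝ) * f₂' ((q₀ : ℝ) * s / q)) < 3*δ/2}.ncard := by
  have hc₄1 : 1 ≤ c₄ := hc₄.2 (mem_insert 1 _)
  have hbound : ∀ x ∈ Icc (0:ℝ) 1, |f₁'' x| ≤ c₄ ∧ |f₂'' x| ≤ c₄ := fun x hx => by
    have := hc₄.2 (mem_insert_of_mem _ ⟨x, hx, rfl⟩)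
    simp only [max_le_iff] at this
    exact ⟨this.1.2.1, this.2.2.1⟩
  obtain ⟨hq₀pos, herr⟩ : 0 < q₀ ∧ c₄ * (q₀ : ℝ) ^ 2 / q ≤ δ / 2 :=
    hq₀ ▸ one_le_floor_sqrt_and_mul_sq_div_le (by linarith) (by exact_mod_cast hq) hδq
  have hclose₁ s a₀ hs ha₀ ha₀q₀ hle := (abs_nint_sub_nint_taylor_block_le hf₁ hf₁'
    (fun x hx => (hbound x hx).1) hq (q₀ := q₀) (s := s) (a₀ := a₀) hs ha₀ ha₀q₀ hle).trans herr
  have hclose₂ s a₀ hs ha₀ ha₀q₀ hle := (abs_nint_sub_nint_taylor_block_le hf₂ hf₂'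
    (fun x hx => (hbound x hx).2) hq (q₀ := q₀) (s := s) (a₀ := a₀) hs ha₀ ha₀q₀ hle).trans herr
  have hr' : r = q / q₀ := by rw [hr, Int.floor_div_cast_of_nonneg hq₀pos.le, Int.floor_natCast]
  simp only [show ∀ a : ℤ, (a : ℝ) ≤ q ↔ a ≤ (q : ℤ) from fun a => by norm_cast]
  refine ⟨sum_Ico_ncard_le_ncard_of_mul_add _ _ hq₀pos (hr' ▸ Int.mul_ediv_self_le hq₀pos.ne')
    ?_, ncard_le_sum_Icc_ncard_of_mul_add _ _ hq₀pos hr'.ge ?_⟩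
  all_goals
    intro s a₀ hs ha₀ ha₀q₀ hle ⟨h₁, h₂⟩
    have e₁ := abs_le.1 (hclose₁ s a₀ hs ha₀ ha₀q₀ hle)
    have e₂ := abs_le.1 (hclose₂ s a₀ hs ha₀ ha₀q₀ hle)
    constructor <;> linarith

theorem A_sandwiched_by_B
    (f₁ f₁' f₁'' f₁''' f₂ f₂' f₂'' f₂''' : ℝ → ℝ)
    (hf₁ : ∀ x ∈ Icc (0:ℝ) 1, HasDerivWithinAt f₁ (f₁' x) (Icc (0:ℝ) 1) x)
    (hf₁' : ∀ x ∈ Icc (0:ℝ) 1, HasDerivWithinAt f₁' (f₁'' x) (Icc (0:ℝ) 1) x)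
    (hf₁'' : ∀ x ∈ Icc (0:ℝ) 1, HasDerivWithinAt f₁'' (f₁''' x) (Icc (0:ℝ) 1) x)
    (hf₁''' : ContinuousOn f₁''' (Icc (0:ℝ) 1))
    (hf₂ : ∀ x ∈ Icc (0:ℝ) 1, HasDerivWithinAt f₂ (f₂' x) (Icc (0:ℝ) 1) x)
    (hf₂' : ∀ x ∈ Icc (0:ℝ) 1, HasDerivWithinAt f₂' (f₂'' x) (Icc (0:ℝ) 1) x)
    (hf₂'' : ∀ x ∈ Icc (0:ℝ) 1, HasDerivWithinAt f₂'' (f₂''' x) (Icc (0:ℝ) 1) x)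
    (hf₂''' : ContinuousOn f₂''' (Icc (0:ℝ) 1))
    (c₄ : ℝ)
    (hc₄ : IsGreatest (insert 1
      ((fun x => max (max (max |f₁ x| |f₁' x|) (max |f₁'' x| |f₁''' x|))
        (max (max |f₂ x| |f₂' x|) (max |f₂'' x| |f₂''' x|))) '' Icc (0:ℝ) 1)) c₄)
    (q : ℕ) (hq : 1 ≤ q) (δ : ℝ) (hδ0 : 0 < δ) (hδhalf : δ < 1/2)
    (hδq : 2 * c₄ / q ≤ δ)
    (q₀ r : ℤ)
    (hq₀ : q₀ = ⌊Real.sqrt (δ * q / (2 * c₄))⌋)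
    (hr : r = ⌊(q : ℝ) / (q₀ : ℝ)⌋) :
    (∑ s ∈ Finset.Ico (0:ℤ) r,
      {a₀ : ℤ | 0 ≤ a₀ ∧ a₀ < q₀ ∧
        nint ((q : ℝ) * f₁ ((q₀ : ℝ) * s / q) + (a₀ : ℝ) * f₁' ((q₀ : ℝ) * s / q)) < δ/2 ∧
        nint ((q : ℝ) * f₂ ((q₀ : ℝ) * s / q) + (a₀ : ℝ) * f₂' ((q₀ : ℝ) * s / q)) < δ/2}.ncard)
      ≤ {a : ℤ | 0 ≤ a ∧ (a : ℝ) ≤ q ∧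
          nint ((q : ℝ) * f₁ ((a : ℝ) / q)) < δ ∧
          nint ((q : ℝ) * f₂ ((a : ℝ) / q)) < δ}.ncard
    ∧
    {a : ℤ | 0 ≤ a ∧ (a : ℝ) ≤ q ∧
        nint ((q : ℝ) * f₁ ((a : ℝ) / q)) < δ ∧
        nint ((q : ℝ) * f₂ ((a : ℝ) / q)) < δ}.ncard
      ≤ ∑ s ∈ Finset.Icc (0:ℤ) r,
        {a₀ : ℤ | 0 ≤ a₀ ∧ a₀ < q₀ ∧
          nint ((q : ℝ) * f₁ ((q₀ : ℝ) * s / q) + (a₀ : ℝ) * f₁' ((q₀ : ℝ) * s / q)) < 3*δ/2 ∧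
          nint ((q : ℝ) * f₂ ((q₀ : ℝ) * s / q) + (a₀ : ℝ) * f₂' ((q₀ : ℝ) * s / q)) < 3*δ/2}.ncard :=
  A_sandwiched_by_B_general f₁ f₁' f₁'' f₁''' f₂ f₂' f₂'' f₂''' hf₁ hf₁' hf₂ hf₂' c₄ hc₄ q hq δ hδq
    q₀ r hq₀ hr
end
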